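/- Let C be a type and M a commutative monoid, and consider the monoid algebra 𝓐 = ℝ[Multiset C × M], i.e. the space of finitely supported real-valued functions on Multiset C × M, with convolution product determined on basis elements by e_{(γ,t)} · e_{(δ,s)} = e_{(γ+δ, t·s)}. Suppose f ∈ 𝓐 is supported on pairs whose multiset component has cardinality 1. Then for every pair (γ,t) ∈ Multiset C × M, the sequence n ↦ (1/n!) · fⁿ(γ,t) has at most one nonzero term, namely n = card γ, and for every natural number N ≥ card γ, ∑_{n=0}^{N} (1/n!) · fⁿ(γ,t) = (1/(card γ)!) · f^{card γ}(γ,t). In particular this value is independent of N, so the coefficientwise series exp_⊙(f) = ∑_{n=0}^{∞} (1/n!) fⁿ is well-defined. -/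

import Mathlib

/-! Grading by the cardinality of the multiset component makes `f` homogeneous of degree 1,
hence `f ^ n` homogeneous of degree `n`: its coefficient at `(γ, t)` vanishes unless
`n = card γ`, and the partial sums collapse to that single term. -/

namespace MonoidAlgebra

variable {k G H : Type*} [Semiring k] [Monoid G] [Monoid H]

theorem map_eq_pow_of_mem_support_pow (d : G →* H) {h : H} {f : MonoidAlgebra k G}
    (hf : ∀ g ∈ f.coeff.support, d g = h) (n : ℕ) :
    ∀ g ∈ (f ^ n).coeff.support, d g = h ^ n := by
  classical
  induction n with
  | zero =>
    intro g hg
    rw [pow_zero] at hg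
    rw [Finset.mem_one.mp (support_coeff_one_subset hg), map_one, pow_zero]
  | succ n ih =>
    intro g hg
    rw [pow_succ] at hg
    obtain ⟨a, ha, b, hb, rfl⟩ := Finset.mem_mul.mp (support_coeff_mul_subset _ _ hg)
    rw [map_mul, ih a ha, hf b hb, pow_succ]

theorem coeff_pow_eq_zero_of_map_ne (d : G →* H) {h : H} {f : MonoidAlgebra k G}
    (hf : ∀ g ∈ f.coeff.support, d g = h) {n : ℕ} {g : G} (hg : d g ≠ h ^ n) :
    (f ^ n).coeff g = 0 :=
  Finsupp.notMem_support_iff.mp fun hmem ↦ hg (map_eq_pow_of_mem_support_pow d hf n g hmem)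

end MonoidAlgebra

/-- In the monoid algebra `ℝ[Multiset C × M]`, if `f` is supported on
pairs whose multiset component has cardinality 1, then for every `(γ,t)` the sequence
`n ↦ (1/n!) · fⁿ(γ,t)` has at most one nonzero term, at `n = card γ`, and every
partial sum `∑_{n=0}^{N}` with `N ≥ card γ` equals `(1/(card γ)!) · f^{card γ}(γ,t)`;
hence the coefficientwise series `exp_⊙(f)` is well-defined. -/
theorem stmt1 {C M : Type*} [CommMonoid M]
    (f : MonoidAlgebra ℝ (Multiplicative (Multiset C) × M))
    (hf : ∀ p ∈ f.coeff.support, Multiset.card (Multiplicative.toAdd p.1) = 1)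
    (γ : Multiset C) (t : M) :
    (∀ n : ℕ, n ≠ Multiset.card γ →
        ((Nat.factorial n : ℝ))⁻¹ * (f ^ n).coeff (Multiplicative.ofAdd γ, t) = 0) ∧
    (∀ N : ℕ, Multiset.card γ ≤ N →
        ∑ n ∈ Finset.range (N + 1),
            ((Nat.factorial n : ℝ))⁻¹ * (f ^ n).coeff (Multiplicative.ofAdd γ, t)
          = ((Nat.factorial (Multiset.card γ) : ℝ))⁻¹ *
              (f ^ Multiset.card γ).coeff (Multiplicative.ofAdd γ, t)) := by
  let degree : Multiplicative (Multiset C) × M →* Multiplicative ℕ :=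
    (AddMonoidHom.toMultiplicative Multiset.cardHom).comp (MonoidHom.fst _ _)
  have off_degree : ∀ n ≠ Multiset.card γ,
      ((Nat.factorial n : ℝ))⁻¹ * (f ^ n).coeff (Multiplicative.ofAdd γ, t) = 0 := by
    intro n hn
    rw [MonoidAlgebra.coeff_pow_eq_zero_of_map_ne degree (h := Multiplicative.ofAdd 1)
      (fun p hp ↦ congrArg Multiplicative.ofAdd (hf p hp)), mul_zero]
    simpa [degree, ← ofAdd_nsmul] using Ne.symm hn
  refine ⟨off_degree, fun N hN ↦ ?_⟩
  exact Finset.sum_eq_single_of_mem _ (Finset.mem_range_succ_iff.mpr hN)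
    fun n _ hn ↦ off_degree n hn
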